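/- arXiv:math/0212110 — 2 statements merged into one kernel-verified Lean document; each statement's English description precedes it below -/
import Mathlib

section
/- Let $\chi : X \to \mathbb{R}$ be a bounded upper semicontinuous nonnegative function on a nonempty compact topological space $X$, and suppose there are continuous maps $f, g : S \to X$ from a topological space $S$ with $g$ surjective, and a real $\lambda > 1$, such that $\chi(f(\sigma)) = \lambda \cdot \chi(g(\sigma))$ for all $\sigma \in S$. Then $\chi \equiv 0$. -/
/-- **Vanishing of a function multiplied by `λ > 1` along a correspondence.**
Let `χ : X → ℝ` be a bounded, nonnegative, upper semicontinuous function on a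
nonempty compact space `X`.  Suppose there are continuous maps `f g : S → X`
with `g` surjective, and a real `λ > 1`, with `χ (f σ) = λ * χ (g σ)` for all
`σ`.  Then `χ ≡ 0`. -/
theorem usc_vanishes_of_dilating_correspondence
    {X S : Type*} [TopologicalSpace X] [TopologicalSpace S]
    [CompactSpace X] [Nonempty X]
    (χ : X → ℝ) (hχ_usc : UpperSemicontinuous χ)
    (hχ_nonneg : ∀ x, 0 ≤ χ x) (hχ_bdd : ∃ C, ∀ x, χ x ≤ C)
    (f g : S → X) (hf : Continuous f) (hg : Continuous g)
    (hg_surj : Function.Surjective g)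
    (lam : ℝ) (hlam : 1 < lam)
    (hrel : ∀ σ, χ (f σ) = lam * χ (g σ)) :
    ∀ x, χ x = 0 := by
  obtain ⟨C, hC⟩ := hχ_bdd
  have hne : (Set.range χ).Nonempty := Set.range_nonempty χ
  have hbdd : BddAbove (Set.range χ) := ⟨C, by rintro _ ⟨x, rfl⟩; exact hC x⟩
  set M := sSup (Set.range χ) with hM
  have hle : ∀ x, χ x ≤ M := fun x => le_csSup hbdd ⟨x, rfl⟩
  -- the maximum is attained
  have hattain : ∃ x₀, χ x₀ = M := by
    set K : ℕ → Set X := fun n => {x | M - 1 / (n + 1) ≤ χ x} with hK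
    have hKcl : ∀ n, IsClosed (K n) := by
      intro n
      have : K n = (χ ⁻¹' Set.Iio (M - 1 / (n + 1)))ᶜ := by
        ext x
        simp [K, not_lt]
      rw [this]
      exact (hχ_usc.isOpen_preimage _).isClosed_compl
    have hKne : ∀ n, (K n).Nonempty := by
      intro n
      have hpos : (0 : ℝ) < 1 / (n + 1) := by positivity
      obtain ⟨y, hy, hy2⟩ := exists_lt_of_lt_csSup hne (by linarith : M - 1 / (n + 1) < M)
      obtain ⟨x, rfl⟩ := hy
      exact ⟨x, le_of_lt hy2⟩
    have hdir : Directed (· ⊇ ·) K := by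
      intro m n
      refine ⟨max m n, ?_, ?_⟩ <;> intro x hx <;> simp only [K, Set.mem_setOf_eq] at hx ⊢ <;>
        refine le_trans (by gcongr <;> simp [Nat.cast_le]) hx
    obtain ⟨x₀, hx₀⟩ := IsCompact.nonempty_iInter_of_directed_nonempty_isCompact_isClosed K
      hdir hKne (fun n => (hKcl n).isCompact) hKcl
    refine ⟨x₀, le_antisymm (hle x₀) ?_⟩
    have h1 : ∀ n : ℕ, M - 1 / (n + 1) ≤ χ x₀ := fun n => Set.mem_iInter.1 hx₀ n
    by_contra h
    obtain ⟨n, hn⟩ := exists_nat_one_div_lt (by linarith [hle x₀] : (0:ℝ) < M - χ x₀)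
    have := h1 n
    push_cast at hn this
    linarith
  obtain ⟨x₀, hx₀⟩ := hattain
  have hM0 : M ≤ 0 := by
    by_contra h
    push_neg at h
    obtain ⟨σ, hσ⟩ := hg_surj x₀
    have h2 := hrel σ
    rw [hσ, hx₀] at h2
    have h3 : M < lam * M := by nlinarith
    linarith [hle (f σ)]
  intro x
  exact le_antisymm (le_trans (hle x) hM0) (hχ_nonneg x)
end

section
/- Let $X$ be a nonempty compact topological space, $\phi : X \to X$ continuous and surjective, $\chi : X \to \mathbb{R}$ a bounded nonnegative upper semicontinuous function, and $\lambda > 1$ a real number with $\chi(\phi(x)) = \lambda \chi(x)$ for all $x$. Then $\chi = 0$ identically. -/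
/-- **Self-map special case.**
Let `X` be a nonempty compact space, `φ : X → X` continuous and surjective,
`χ : X → ℝ` bounded, nonnegative and upper semicontinuous, and `λ > 1` with
`χ (φ x) = λ * χ x` for all `x`.  Then `χ` vanishes identically. -/
theorem usc_vanishes_of_dilating_selfmap
    {X : Type*} [TopologicalSpace X] [CompactSpace X] [Nonempty X]
    (φ : X → X) (hφ : Continuous φ) (hφ_surj : Function.Surjective φ)
    (χ : X → ℝ) (hχ_usc : UpperSemicontinuous χ)
    (hχ_nonneg : ∀ x, 0 ≤ χ x) (hχ_bdd : ∃ C, ∀ x, χ x ≤ C)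
    (lam : ℝ) (hlam : 1 < lam)
    (hrel : ∀ x, χ (φ x) = lam * χ x) :
    ∀ x, χ x = 0 := by
  obtain ⟨C, hC⟩ := hχ_bdd
  intro x
  have hiter : ∀ n : ℕ, χ (φ^[n] x) = lam ^ n * χ x := by
    intro n
    induction n with
    | zero => simp
    | succ n ih =>
      rw [Function.iterate_succ_apply', hrel, ih, pow_succ]
      ring
  by_contra h
  have hpos : 0 < χ x := lt_of_le_of_ne (hχ_nonneg x) (Ne.symm h)
  have htend : Filter.Tendsto (fun n : ℕ => lam ^ n * χ x) Filter.atTop Filter.atTop :=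
    (tendsto_pow_atTop_atTop_of_one_lt hlam).atTop_mul_const hpos
  obtain ⟨n, hn⟩ := (htend.eventually_gt_atTop C).exists
  exact absurd (hiter n ▸ hC (φ^[n] x)) (not_le.mpr hn)
end
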